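/- arXiv:2408.10896 — 2 statements merged into one kernel-verified Lean document; each statement's English description precedes it below -/
import Mathlib

section
/- Let A be a finite poset, D_A its set of minimal elements, G_A the graph on D_A with edges {β,β'} whenever β,β' ≤ α for some α ∈ A. For an edge (β,β') define Θ(β,β') = {γ ∈ D_A : A(β) ∩ A(β') ⊆ A(γ)} where A(β) is the principal up-set of β, and length θ(β,β') = |Θ(β,β')|. Let T be a locally connected spanning tree of G_A, let (b₀,b_n) be an edge of G_A not in T, let C be the cycle of T + (b₀,b_n), and let (b_{i-1},b_i) be any edge of the path C − (b₀,b_n). Set T' = T + (b₀,b_n) − (b_{i-1},b_i). If θ(T') ≤ θ(T), then θ(T') = θ(T) and T' is also locally connected. -/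
open scoped Classical

/-- The minimal elements of a poset `A`. -/
abbrev Dmin (A : Type*) [PartialOrder A] : Type _ := {a : A // IsMin a}

/-- The graph of interlaced relation on the minimal elements of `A`. -/
def interlaced (A : Type*) [PartialOrder A] : SimpleGraph (Dmin A) where
  Adj β β' := β ≠ β' ∧ ∃ α : A, β.1 ≤ α ∧ β'.1 ≤ α
  symm := ⟨by
    rintro β β' ⟨hne, α, h1, h2⟩
    exact ⟨hne.symm, α, h2, h1⟩⟩
  loopless := ⟨by rintro β ⟨hne, -⟩; exact hne rfl⟩

/-- Local connectedness of a spanning tree of the graph of interlaced relation. -/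
def LocallyConnected {A : Type*} [PartialOrder A] (T : SimpleGraph (Dmin A)) : Prop :=
  ∀ α : A, (T.induce {β : Dmin A | β.1 ≤ α}).Connected

/-- The length `θ(β,β') = |Θ(β,β')|` of an edge, where
`Θ(β,β') = {γ ∈ D_A : A(β) ∩ A(β') ⊆ A(γ)}`. -/
noncomputable def edgeLength {A : Type*} [Fintype A] [PartialOrder A]
    (e : Sym2 (Dmin A)) : ℕ :=
  Nat.card {γ : Dmin A // ∀ α : A, (∀ β ∈ e, (β : Dmin A).1 ≤ α) → γ.1 ≤ α}

/-- The weight of a graph on the minimal elements with respect to the lengths `θ`. -/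
noncomputable def weightA {A : Type*} [Fintype A] [PartialOrder A]
    (T : SimpleGraph (Dmin A)) : ℕ :=
  ∑ e : Sym2 (Dmin A), if e ∈ T.edgeSet then edgeLength e else 0


/-!
Since `T'` is a tree containing the edge `b₀bₙ`, the forest `T - f` does not join `b₀` to `bₙ`.
Local connectedness of `T` therefore puts both ends of `f` below every common upper bound of
`b₀` and `bₙ`, i.e. `Θ(f) ⊆ Θ(b₀, bₙ)` and `θ(f) ≤ θ(b₀, bₙ)`. As
`θ(T') + θ(f) = θ(T) + θ(b₀, bₙ)`, the hypothesis `θ(T') ≤ θ(T)` forces equality, so the two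
edges have the same common upper bounds. Hence, for each `α`, either `f` is not an edge of
`T` on `D_A(α)`, which is then unchanged, or both `f` and `b₀bₙ` lie in `D_A(α)` and `b₀bₙ`
reconnects the two sides of `T - f` there.
-/

open SimpleGraph

namespace SimpleGraph

variable {V : Type*} {G G' : SimpleGraph V} {u v x y : V}

theorem Reachable.deleteEdges_reachable_or (h : G.Reachable u x) :
    (G.deleteEdges {s(x, y)}).Reachable u x ∨ (G.deleteEdges {s(x, y)}).Reachable u y := by
  obtain ⟨p⟩ := h
  induction p with
  | nil => exact Or.inl .rfl
  | @cons a b z hab _ ih =>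
    by_cases hedge : s(a, b) = s(z, y)
    · rcases Sym2.eq_iff.mp hedge with ⟨rfl, -⟩ | ⟨rfl, -⟩
      · exact Or.inl .rfl
      · exact Or.inr .rfl
    · have hD : (G.deleteEdges {s(z, y)}).Adj a b := deleteEdges_adj.mpr ⟨hab, hedge⟩
      exact ih.imp hD.reachable.trans hD.reachable.trans

theorem IsAcyclic.not_reachable_deleteEdges_of_exchange {f : Sym2 V} (hG' : G'.IsAcyclic)
    (huv : G'.Adj u v) (hnuv : ¬ G.Adj u v) (hsub : G.deleteEdges {f} ≤ G') :
    ¬ (G.deleteEdges {f}).Reachable u v := fun h =>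
  isAcyclic_iff_forall_adj_isBridge.mp hG' huv <| h.mono fun a b hab =>
    deleteEdges_adj.mpr ⟨hsub hab, fun he => hnuv <| by
      rw [Set.mem_singleton_iff] at he
      exact (G.mem_edgeSet).mp (he ▸ (deleteEdges_adj.mp hab).1)⟩

theorem Connected.of_exchange (hG : G.Connected) (huv : G'.Adj u v)
    (hsub : G.deleteEdges {s(x, y)} ≤ G') (hcut : ¬ (G.deleteEdges {s(x, y)}).Reachable u v) :
    G'.Connected := by
  have hxy : G'.Reachable x y := by
    rcases (hG.preconnected u x).deleteEdges_reachable_or (y := y) with hu | hu <;>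
      rcases (hG.preconnected v x).deleteEdges_reachable_or (y := y) with hv | hv
    · exact absurd (hu.trans hv.symm) hcut
    · exact (hu.mono hsub).symm.trans (huv.reachable.trans (hv.mono hsub))
    · exact (hv.mono hsub).symm.trans (huv.symm.reachable.trans (hu.mono hsub))
    · exact absurd (hu.trans hv.symm) hcut
  have hadj : ∀ a b, G.Adj a b → G'.Reachable a b := fun a b hab => by
    by_cases hedge : s(a, b) = s(x, y)
    · rcases Sym2.eq_iff.mp hedge with ⟨rfl, rfl⟩ | ⟨rfl, rfl⟩
      exacts [hxy, hxy.symm]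
    · exact (hsub (deleteEdges_adj.mpr ⟨hab, hedge⟩)).reachable
  refine (connected_iff_exists_forall_reachable _).mpr ⟨u, fun b => ?_⟩
  have hub := hG.preconnected u b
  rw [reachable_eq_reflTransGen] at hadj hub ⊢
  exact hub.lift' id hadj

variable {S : Set V}

theorem induce_le_induce_deleteEdges (h : ¬ (x ∈ S ∧ y ∈ S)) :
    G.induce S ≤ (G.deleteEdges {s(x, y)}).induce S := fun a b hab =>
  deleteEdges_adj.mpr ⟨hab, fun he => h <| by
    rcases Sym2.eq_iff.mp he with ⟨ha, hb⟩ | ⟨ha, hb⟩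
    exacts [⟨ha ▸ a.2, hb ▸ b.2⟩, ⟨hb ▸ b.2, ha ▸ a.2⟩]⟩

theorem induce_deleteEdges_pair (hx : x ∈ S) (hy : y ∈ S) :
    (G.induce S).deleteEdges {s(⟨x, hx⟩, ⟨y, hy⟩)} = (G.deleteEdges {s(x, y)}).induce S := by
  ext a b
  simp [Subtype.ext_iff]

theorem Preconnected.mem_of_not_reachable_deleteEdges (hS : (G.induce S).Preconnected)
    (hu : u ∈ S) (hv : v ∈ S) (hcut : ¬ (G.deleteEdges {s(x, y)}).Reachable u v) :
    x ∈ S ∧ y ∈ S := by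
  by_contra h
  exact hcut <| ((hS ⟨u, hu⟩ ⟨v, hv⟩).mono (induce_le_induce_deleteEdges h)).map
    (Embedding.induce S).toHom

theorem Connected.induce_of_exchange (hS : (G.induce S).Connected) (huv : G'.Adj u v)
    (hsub : G.deleteEdges {s(x, y)} ≤ G') (hcut : ¬ (G.deleteEdges {s(x, y)}).Reachable u v)
    (huvS : x ∈ S → y ∈ S → u ∈ S ∧ v ∈ S) : (G'.induce S).Connected := by
  by_cases hxy : x ∈ S ∧ y ∈ S
  · obtain ⟨hu, hv⟩ := huvS hxy.1 hxy.2
    refine hS.of_exchange (u := ⟨u, hu⟩) (v := ⟨v, hv⟩) (x := ⟨x, hxy.1⟩) (y := ⟨y, hxy.2⟩)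
      huv ?_ ?_ <;> rw [induce_deleteEdges_pair hxy.1 hxy.2]
    · exact fun a b hab => hsub hab
    · exact fun h => hcut (h.map (Embedding.induce S).toHom)
  · exact hS.mono ((induce_le_induce_deleteEdges hxy).trans fun a b hab => hsub hab)

end SimpleGraph

theorem sum_ite_mem_add_of_exchange {α M : Type*} [Fintype α] [AddCommMonoid M] (w : α → M)
    {s t : Set α} [DecidablePred (· ∈ s)] [DecidablePred (· ∈ t)] {a b : α}
    (ht : t = (s ∪ {a}) \ {b}) (ha : a ∉ s) (hb : b ∈ s) :
    (∑ x, if x ∈ t then w x else 0) + w b = (∑ x, if x ∈ s then w x else 0) + w a := by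
  have hpt : ∀ x, (if x ∈ t then w x else 0) + (if x = b then w x else 0) =
      (if x ∈ s then w x else 0) + (if x = a then w x else 0) := by
    intro x
    subst ht
    by_cases hxa : x = a <;> by_cases hxb : x = b <;> simp_all
  simpa [Finset.sum_add_distrib] using Finset.sum_congr (s₁ := Finset.univ) rfl fun x _ => hpt x

section Poset

variable {A : Type*} [PartialOrder A]

def edgeUpperBounds (e : Sym2 (Dmin A)) : Set A := {α | ∀ β ∈ e, β.1 ≤ α}

/-- The paper's `Θ(e)`. -/
def edgeTheta (e : Sym2 (Dmin A)) : Set (Dmin A) := {γ | edgeUpperBounds e ⊆ Set.Ici γ.1}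

@[simp]
theorem mem_edgeUpperBounds_pair {β β' : Dmin A} {α : A} :
    α ∈ edgeUpperBounds s(β, β') ↔ β.1 ≤ α ∧ β'.1 ≤ α := by
  simp [edgeUpperBounds]

theorem mem_edgeTheta_of_mem {β : Dmin A} {e : Sym2 (Dmin A)} (h : β ∈ e) : β ∈ edgeTheta e :=
  fun _ hα => hα β h

theorem edgeTheta_subset_edgeTheta {e f : Sym2 (Dmin A)}
    (h : edgeUpperBounds e ⊆ edgeUpperBounds f) : edgeTheta f ⊆ edgeTheta e :=
  fun _ hγ => h.trans hγ

theorem LocallyConnected.edgeUpperBounds_subset {T : SimpleGraph (Dmin A)} {u v x y : Dmin A}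
    (hlc : LocallyConnected T) (hcut : ¬ (T.deleteEdges {s(x, y)}).Reachable u v) :
    edgeUpperBounds s(u, v) ⊆ edgeUpperBounds s(x, y) := fun α hα => by
  rw [mem_edgeUpperBounds_pair] at hα ⊢
  exact (hlc α).preconnected.mem_of_not_reachable_deleteEdges hα.1 hα.2 hcut

theorem LocallyConnected.of_exchange {T T' : SimpleGraph (Dmin A)} {u v x y : Dmin A}
    (hlc : LocallyConnected T) (huv : T'.Adj u v) (hsub : T.deleteEdges {s(x, y)} ≤ T')
    (hcut : ¬ (T.deleteEdges {s(x, y)}).Reachable u v)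
    (hub : edgeUpperBounds s(x, y) ⊆ edgeUpperBounds s(u, v)) : LocallyConnected T' := fun α =>
  (hlc α).induce_of_exchange huv hsub hcut fun hx hy =>
    mem_edgeUpperBounds_pair.mp (hub (mem_edgeUpperBounds_pair.mpr ⟨hx, hy⟩))

variable [Fintype A]

theorem edgeLength_eq_ncard (e : Sym2 (Dmin A)) : edgeLength e = (edgeTheta e).ncard :=
  Nat.card_coe_set_eq _

theorem edgeLength_le_edgeLength {e f : Sym2 (Dmin A)}
    (h : edgeUpperBounds e ⊆ edgeUpperBounds f) : edgeLength f ≤ edgeLength e := by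
  simpa only [edgeLength_eq_ncard] using
    Set.ncard_le_ncard (edgeTheta_subset_edgeTheta h) (Set.toFinite _)

theorem edgeUpperBounds_subset_of_edgeLength_le {e f : Sym2 (Dmin A)}
    (h : edgeUpperBounds e ⊆ edgeUpperBounds f) (hle : edgeLength e ≤ edgeLength f) :
    edgeUpperBounds f ⊆ edgeUpperBounds e := by
  have hΘ : edgeTheta f = edgeTheta e := Set.eq_of_subset_of_ncard_le
    (edgeTheta_subset_edgeTheta h) (by simpa only [edgeLength_eq_ncard] using hle)
    (Set.toFinite _)
  intro α hα β hβ
  exact (hΘ ▸ mem_edgeTheta_of_mem hβ : β ∈ edgeTheta f) hα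

end Poset

theorem stmt_9_general {A : Type*} [Fintype A] [PartialOrder A]
    (T : SimpleGraph (Dmin A))
    (hlc : LocallyConnected T)
    (b0 bn : Dmin A) (henT : ¬ T.Adj b0 bn)
    (f : Sym2 (Dmin A)) (hf : f ∈ T.edgeSet) (hfne : f ≠ s(b0, bn))
    (T' : SimpleGraph (Dmin A))
    (hT'edges : T'.edgeSet = (T.edgeSet ∪ {s(b0, bn)}) \ {f})
    (hT' : T' ≤ interlaced A ∧ T'.IsTree)
    (hw : weightA T' ≤ weightA T) :
    weightA T' = weightA T ∧ LocallyConnected T' := by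
  cases f with | h x y
  have hadj : T'.Adj b0 bn := by
    rw [← mem_edgeSet, hT'edges]
    exact ⟨Or.inr rfl, hfne.symm⟩
  have hsub : T.deleteEdges {s(x, y)} ≤ T' := by
    rw [← edgeSet_subset_edgeSet, edgeSet_deleteEdges, hT'edges]
    exact Set.sdiff_subset_sdiff_left Set.subset_union_left
  have hcut := hT'.2.isAcyclic.not_reachable_deleteEdges_of_exchange hadj henT hsub
  have hub := hlc.edgeUpperBounds_subset hcut
  have hweight : weightA T' + edgeLength s(x, y) = weightA T + edgeLength s(b0, bn) :=
    sum_ite_mem_add_of_exchange edgeLength hT'edges henT hf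
  have hlen := edgeLength_le_edgeLength hub
  exact ⟨by omega, hlc.of_exchange hadj hsub hcut
    (edgeUpperBounds_subset_of_edgeLength_le hub (by omega))⟩

/-- Lemma 4.4: exchanging an edge of a locally connected spanning tree `T` along the
cycle created by a new edge `(b₀,bₙ)`, if the weight does not increase then it stays
the same and the new spanning tree `T'` is again locally connected. -/
theorem stmt_9 {A : Type*} [Fintype A] [PartialOrder A]
    (T : SimpleGraph (Dmin A)) (hT : T ≤ interlaced A ∧ T.IsTree)
    (hlc : LocallyConnected T)
    (b0 bn : Dmin A) (he : (interlaced A).Adj b0 bn) (henT : ¬ T.Adj b0 bn)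
    (f : Sym2 (Dmin A)) (hf : f ∈ T.edgeSet) (hfne : f ≠ s(b0, bn))
    (T' : SimpleGraph (Dmin A))
    (hT'edges : T'.edgeSet = (T.edgeSet ∪ {s(b0, bn)}) \ {f})
    (hT' : T' ≤ interlaced A ∧ T'.IsTree)
    (hw : weightA T' ≤ weightA T) :
    weightA T' = weightA T ∧ LocallyConnected T' :=
  stmt_9_general T hlc b0 bn henT f hf hfne T' hT'edges hT' hw
end

section
/- Let A be a finite poset whose graph of interlaced relation G_A is connected, and suppose T is a minimum weight spanning tree of G_A (with lengths θ(β,β') = |Θ(β,β')|) such that T ∩ D_A(a₀) is disconnected for some a₀ ∈ A. Choose x₀ = b₀ in one component of T ∩ D_A(a₀) such that a path (x₀, …, x_m) in T, with m ≥ 2, uses no edges of T ∩ D_A(a₀) and ends at x_m in another component of T ∩ D_A(a₀). Then for each i = 1, …, m, the set (A(x_{i-1}) ∩ A(x_i)) \ (A(b₀) ∩ A(x_m)) is nonempty. -/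
/-!
If `A(x_{i-1}) ∩ A(x_i) ⊆ A(b₀) ∩ A(x_m)`, then `Θ(b₀, x_m) ⊆ Θ(x_{i-1}, x_i)`, and the
inclusion is strict: the edge `x_{i-1}x_i` is not in `D_A(a₀)`, and an end of it that is not
below `a₀` lies in the second set only, because `a₀ ∈ A(b₀) ∩ A(x_m)`. Removing `x_{i-1}x_i`
from `T` leaves `b₀` and `x_m` on opposite sides (the two pieces of the path connect them to
the two ends of the edge), so `T + b₀x_m - x_{i-1}x_i` is again a spanning tree of `G_A`, of
strictly smaller weight.
-/

open scoped Classical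

namespace SimpleGraph

variable {V : Type*} {G : SimpleGraph V}

theorem reachable_of_adj_castSucc_succ {m : ℕ} {x : Fin (m + 1) → V} {j k : Fin (m + 1)}
    (hjk : j ≤ k) (h : ∀ i : Fin m, j ≤ i.castSucc → i.succ ≤ k → G.Adj (x i.castSucc) (x i.succ)) :
    G.Reachable (x j) (x k) := by
  induction k using Fin.induction with
  | zero => rw [Fin.le_zero_iff.mp hjk]
  | succ i ih =>
    rcases hjk.eq_or_lt with rfl | hlt
    · rfl
    have hji : j ≤ i.castSucc := Fin.le_castSucc_iff.mpr hlt
    have hprefix : G.Reachable (x j) (x i.castSucc) :=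
      ih hji fun l hl hli => h l hl (hli.trans (Fin.castSucc_le_succ i))
    exact hprefix.trans (h i hji le_rfl).reachable

theorem eq_of_sym2_mk_castSucc_succ_eq {m : ℕ} {x : Fin (m + 1) → V} (hx : Function.Injective x)
    {i l : Fin m} (h : s(x l.castSucc, x l.succ) = s(x i.castSucc, x i.succ)) : l = i := by
  rcases Sym2.eq_iff.mp h with ⟨h1, -⟩ | ⟨h1, h2⟩
  · exact Fin.castSucc_injective _ (hx h1)
  · have e1 := congrArg Fin.val (hx h1)
    have e2 := congrArg Fin.val (hx h2)
    simp only [Fin.val_castSucc, Fin.val_succ] at e1 e2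
    omega

theorem reachable_deleteEdges_of_path {m : ℕ} {x : Fin (m + 1) → V} (hx : Function.Injective x)
    (hpath : ∀ i : Fin m, G.Adj (x i.castSucc) (x i.succ)) (i : Fin m) :
    (G.deleteEdges {s(x i.castSucc, x i.succ)}).Reachable (x 0) (x i.castSucc) ∧
      (G.deleteEdges {s(x i.castSucc, x i.succ)}).Reachable (x i.succ) (x (Fin.last m)) := by
  have hadj : ∀ l ≠ i, (G.deleteEdges {s(x i.castSucc, x i.succ)}).Adj (x l.castSucc) (x l.succ) :=
    fun l hl =>
      (deleteEdges_adj ..).mpr ⟨hpath l, fun h => hl (eq_of_sym2_mk_castSucc_succ_eq hx h)⟩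
  refine ⟨reachable_of_adj_castSucc_succ (Fin.zero_le _) fun l _ hli => hadj l ?_,
    reachable_of_adj_castSucc_succ (Fin.le_last _) fun l hil _ => hadj l ?_⟩
  · rintro rfl
    exact absurd hli Fin.castSucc_lt_succ.not_ge
  · rintro rfl
    exact absurd hil Fin.castSucc_lt_succ.not_ge

theorem Preconnected.of_forall_adj_reachable {H : SimpleGraph V} (hG : G.Preconnected)
    (h : ∀ p q, G.Adj p q → H.Reachable p q) : H.Preconnected := fun p q =>
  (reachable_iff_reflTransGen _ _).mpr <| ((reachable_iff_reflTransGen _ _).mp (hG p q)).lift' id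
    fun p q hpq => (reachable_iff_reflTransGen _ _).mp (h p q hpq)

theorem IsTree.deleteEdges_sup_edge {T : SimpleGraph V} (hT : T.IsTree) {u v a b : V}
    (huv : T.Adj u v) (hau : (T.deleteEdges {s(u, v)}).Reachable a u)
    (hvb : (T.deleteEdges {s(u, v)}).Reachable v b) :
    (T.deleteEdges {s(u, v)} ⊔ edge a b).IsTree := by
  set T₀ := T.deleteEdges {s(u, v)}
  have hbridge : ¬T₀.Reachable u v :=
    isBridge_iff.mp (isAcyclic_iff_forall_adj_isBridge.mp hT.isAcyclic huv)
  have hab : ¬T₀.Reachable a b := fun h => hbridge (hau.symm.trans (h.trans hvb.symm))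
  have hne : a ≠ b := by
    rintro rfl
    exact hab .rfl
  have hreach : ∀ p q, T.Adj p q → (T₀ ⊔ edge a b).Reachable p q := by
    intro p q hpq
    by_cases he : s(p, q) = s(u, v)
    · have hedge : (T₀ ⊔ edge a b).Adj a b := Or.inr ((edge_adj ..).mpr ⟨.inl ⟨rfl, rfl⟩, hne⟩)
      have huv' : (T₀ ⊔ edge a b).Reachable u v :=
        (hau.symm.mono le_sup_left).trans (hedge.reachable.trans (hvb.symm.mono le_sup_left))
      rcases Sym2.eq_iff.mp he with ⟨rfl, rfl⟩ | ⟨rfl, rfl⟩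
      · exact huv'
      · exact huv'.symm
    · exact Adj.reachable (Or.inl ((deleteEdges_adj ..).mpr ⟨hpq, he⟩))
  have := hT.connected.nonempty
  exact ⟨⟨hT.connected.preconnected.of_forall_adj_reachable hreach⟩,
    (hT.isAcyclic.anti (deleteEdges_le _)).sup_edge_of_not_reachable hab⟩

end SimpleGraph

open SimpleGraph

section EdgeLength

variable {A : Type*} [PartialOrder A]

@[simp]
theorem mem_edgeUpperBounds_mk {α : A} {β β' : Dmin A} :
    α ∈ edgeUpperBounds s(β, β') ↔ β.1 ≤ α ∧ β'.1 ≤ α := by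
  simp [edgeUpperBounds]

variable [Fintype A]

theorem weightA_sup_le (G H : SimpleGraph (Dmin A)) :
    weightA (G ⊔ H) ≤ weightA G + weightA H := by
  unfold weightA
  rw [← Finset.sum_add_distrib]
  gcongr with e
  simp only [edgeSet_sup, Set.mem_union]
  split_ifs <;> simp_all

theorem weightA_edge_le (a b : Dmin A) : weightA (edge a b) ≤ edgeLength s(a, b) := by
  calc weightA (edge a b) ≤ ∑ e, if e = s(a, b) then edgeLength e else 0 := by
        refine Finset.sum_le_sum fun e _ => ?_
        split_ifs with he he'
        exacts [le_rfl, absurd (edgeSet_edge_subset he) he', Nat.zero_le _, le_rfl]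
    _ = edgeLength s(a, b) := by simp

theorem weightA_deleteEdges_singleton_add {G : SimpleGraph (Dmin A)} {f : Sym2 (Dmin A)}
    (hf : f ∈ G.edgeSet) : weightA (G.deleteEdges {f}) + edgeLength f = weightA G := by
  have hsingle : edgeLength f = ∑ e, if e = f then edgeLength e else 0 := by simp
  rw [hsingle, weightA, weightA, ← Finset.sum_add_distrib]
  refine Finset.sum_congr rfl fun e _ => ?_
  simp only [edgeSet_deleteEdges, Set.mem_sdiff, Set.mem_singleton_iff]
  split_ifs <;> simp_all

theorem edgeLength_eq_ncard_s15 (e : Sym2 (Dmin A)) :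
    edgeLength e = {γ : Dmin A | ∀ α ∈ edgeUpperBounds e, γ.1 ≤ α}.ncard := by
  rw [edgeLength, ← Nat.card_coe_set_eq]
  rfl

theorem edgeLength_lt_of_ssubset {e f : Sym2 (Dmin A)}
    (h : edgeUpperBounds e ⊂ edgeUpperBounds f) : edgeLength f < edgeLength e := by
  obtain ⟨hsub, α, hαf, hαe⟩ := Set.ssubset_iff_exists.mp h
  obtain ⟨w, hwe, hwα⟩ : ∃ w ∈ e, ¬w.1 ≤ α := by simpa [edgeUpperBounds] using hαe
  rw [edgeLength_eq_ncard_s15, edgeLength_eq_ncard_s15]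
  refine Set.ncard_lt_ncard
    ⟨fun γ hγ α' hα' => hγ α' (hsub hα'), fun hss => hwα ?_⟩ (Set.toFinite _)
  exact hss (fun α' hα' => hα' w hwe) α hαf

end EdgeLength

theorem edgeLength_le_of_reachable_deleteEdges {A : Type*} [Fintype A] [PartialOrder A]
    {T : SimpleGraph (Dmin A)} (hT : T ≤ interlaced A) (htree : T.IsTree)
    (hmin : ∀ T', T' ≤ interlaced A → T'.IsTree → weightA T ≤ weightA T')
    {u v a b : Dmin A} (huv : T.Adj u v) (hab : (interlaced A).Adj a b)
    (hau : (T.deleteEdges {s(u, v)}).Reachable a u)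
    (hvb : (T.deleteEdges {s(u, v)}).Reachable v b) :
    edgeLength s(u, v) ≤ edgeLength s(a, b) := by
  have hle : T.deleteEdges {s(u, v)} ⊔ edge a b ≤ interlaced A :=
    sup_le ((deleteEdges_le _).trans hT) ((edge_le_iff _).mpr (.inr hab))
  have hexchange := hmin _ hle (htree.deleteEdges_sup_edge huv hau hvb)
  have hsplit := weightA_deleteEdges_singleton_add (T.mem_edgeSet.mpr huv)
  have hsup := weightA_sup_le (T.deleteEdges {s(u, v)}) (edge a b)
  have hedge := weightA_edge_le a b
  omega

theorem stmt_15_general {A : Type*} [Fintype A] [PartialOrder A]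
    (T : SimpleGraph (Dmin A)) (hT : T ≤ interlaced A ∧ T.IsTree)
    (hmin : ∀ T', T' ≤ interlaced A → T'.IsTree → weightA T ≤ weightA T')
    (a0 : A)
    (m : ℕ) (x : Fin (m + 1) → Dmin A)
    (hinj : Function.Injective x)
    (hpath : ∀ i : Fin m, T.Adj (x i.castSucc) (x i.succ))
    (h0 : (x 0).1 ≤ a0) (hlast : (x (Fin.last m)).1 ≤ a0)
    (hmid : ∀ i : Fin m, ¬((x i.castSucc).1 ≤ a0 ∧ (x i.succ).1 ≤ a0)) :
    ∀ i : Fin m, ∃ α : A, ((x i.castSucc).1 ≤ α ∧ (x i.succ).1 ≤ α) ∧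
      ¬((x 0).1 ≤ α ∧ (x (Fin.last m)).1 ≤ α) := by
  intro i
  by_contra! hsub
  have hends : (interlaced A).Adj (x 0) (x (Fin.last m)) :=
    ⟨hinj.ne ((Fin.zero_le _).trans_lt (Fin.castSucc_lt_last i)).ne, a0, h0, hlast⟩
  have hlt : edgeLength s(x 0, x (Fin.last m)) < edgeLength s(x i.castSucc, x i.succ) :=
    edgeLength_lt_of_ssubset <| Set.ssubset_iff_exists.mpr
      ⟨fun α hα => by simpa using hsub α (by simpa using hα), a0, by simpa using ⟨h0, hlast⟩,
        by simpa using hmid i⟩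
  obtain ⟨hfirst, hrest⟩ := reachable_deleteEdges_of_path hinj hpath i
  have hle := edgeLength_le_of_reachable_deleteEdges hT.1 hT.2 hmin (hpath i) hends hfirst hrest
  omega

/-- Part of Lemma 4.6: if `T` is a minimum weight spanning tree of the graph of
interlaced relation, `T ∩ D_A(a₀)` is disconnected, and `(x₀, …, x_m)` (`m ≥ 2`) is a
path in `T` from `b₀ = x₀` to `x_m` lying in different components of `T ∩ D_A(a₀)`
using no edges of `T ∩ D_A(a₀)`, then for each `i = 1, …, m` the set
`(A(x_{i-1}) ∩ A(x_i)) \ (A(b₀) ∩ A(x_m))` is nonempty. -/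
theorem stmt_15 {A : Type*} [Fintype A] [PartialOrder A]
    (T : SimpleGraph (Dmin A)) (hT : T ≤ interlaced A ∧ T.IsTree)
    (hmin : ∀ T', T' ≤ interlaced A → T'.IsTree → weightA T ≤ weightA T')
    (a0 : A)
    (hdisc : ¬ (T.induce {β : Dmin A | β.1 ≤ a0}).Connected)
    (m : ℕ) (hm : 2 ≤ m) (x : Fin (m + 1) → Dmin A)
    (hinj : Function.Injective x)
    (hpath : ∀ i : Fin m, T.Adj (x i.castSucc) (x i.succ))
    (h0 : (x 0).1 ≤ a0) (hlast : (x (Fin.last m)).1 ≤ a0)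
    (hmid : ∀ i : Fin m, ¬((x i.castSucc).1 ≤ a0 ∧ (x i.succ).1 ≤ a0))
    (hnr : ¬ (T.induce {β : Dmin A | β.1 ≤ a0}).Reachable
      ⟨x 0, h0⟩ ⟨x (Fin.last m), hlast⟩) :
    ∀ i : Fin m, ∃ α : A, ((x i.castSucc).1 ≤ α ∧ (x i.succ).1 ≤ α) ∧
      ¬((x 0).1 ≤ α ∧ (x (Fin.last m)).1 ≤ α) :=
  stmt_15_general T hT hmin a0 m x hinj hpath h0 hlast hmid
end
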